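/- Fix T > 0. Define g_j(t) := 1 − e^{2εΩ_j(t−T)} for j = 1,2 and χ̄(t) := diag(1, g₂(t), g₁(t), g₁(t)g₂(t)). Then χ̄(T) = diag(1,0,0,0), and for every t ∈ ℝ the matrix-valued function χ̄ is differentiable at t with χ̄′(t) = −i[H₀, χ̄(t)] − ε𝓛ᴰ†_{(0,0)}(χ̄(t)); i.e., χ̄ is the exact solution of the adjoint (costate) system of the Krotov-type method with zero controls and transversality condition χ(T) = ρ_target = diag(1,0,0,0). -/

import Mathlib

/-!
Write `G_j(t) := diag(1, g_j(t)) = 1 - e^{2εΩ_j(t-T)} σ⁺σ⁻`, so that `χ̄(t) = G₁(t) ⊗ G₂(t)`.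
On such product operators the generator splits into one-qubit pieces: `H₀` and `χ̄` are diagonal,
so the commutator vanishes, and `𝓛ᴰ†_{(0,0)}(A ⊗ B) = Ω₁ D(A) ⊗ B + Ω₂ A ⊗ D(B)` with
`D(χ) = 2σ⁺χσ⁻ - {σ⁺σ⁻, χ}`. Since `σ⁺σ⁺ = 0` and `σ⁺σ⁻` is a projection, `D(1) = 0` and
`D(σ⁺σ⁻) = -2σ⁺σ⁻`, hence `G_j' = -εΩ_j D(G_j)`, and the Leibniz rule for `⊗` gives the claim.
-/

open Matrix Kronecker Complex
open scoped ComplexOrder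

noncomputable section

/-- 4×4 complex matrices, indexed by two-qubit (tensor-product) indices
in the order (0,0), (0,1), (1,0), (1,1). -/
abbrev M4 : Type := Matrix (Fin 2 × Fin 2) (Fin 2 × Fin 2) ℂ

/-- σ⁺ = [[0,0],[1,0]]. -/
def σp : Matrix (Fin 2) (Fin 2) ℂ := !![0, 0; 1, 0]
/-- σ⁻ = [[0,1],[0,0]]. -/
def σm : Matrix (Fin 2) (Fin 2) ℂ := !![0, 1; 0, 0]
/-- σ_z = diag(1,−1). -/
def σz : Matrix (Fin 2) (Fin 2) ℂ := !![1, 0; 0, -1]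

/-- σ₁⁺ = σ⁺ ⊗ I₂. -/
def s1p : M4 := σp ⊗ₖ (1 : Matrix (Fin 2) (Fin 2) ℂ)
/-- σ₁⁻ = σ⁻ ⊗ I₂. -/
def s1m : M4 := σm ⊗ₖ (1 : Matrix (Fin 2) (Fin 2) ℂ)
/-- σ₂⁺ = I₂ ⊗ σ⁺. -/
def s2p : M4 := (1 : Matrix (Fin 2) (Fin 2) ℂ) ⊗ₖ σp
/-- σ₂⁻ = I₂ ⊗ σ⁻. -/
def s2m : M4 := (1 : Matrix (Fin 2) (Fin 2) ℂ) ⊗ₖ σm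
/-- W₁ = σ_z ⊗ I₂. -/
def W1 : M4 := σz ⊗ₖ (1 : Matrix (Fin 2) (Fin 2) ℂ)
/-- W₂ = I₂ ⊗ σ_z. -/
def W2 : M4 := (1 : Matrix (Fin 2) (Fin 2) ℂ) ⊗ₖ σz

/-- diag(a,b,c,d) as a two-qubit 4×4 matrix. -/
def diag4 (a b c d : ℂ) : M4 :=
  Matrix.diagonal fun p => ![![a, b], ![c, d]] p.1 p.2

/-- Contribution of qubit j (with lowering/raising operators sm/sp) to the
controlled GKSL dissipator: Ω[(n+1)(2σ⁻ρσ⁺ − {σ⁺σ⁻,ρ}) + n(2σ⁺ρσ⁻ − {σ⁻σ⁺,ρ})]. -/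
def dissJ (sm sp : M4) (Ω nj : ℝ) (ρ : M4) : M4 :=
  (Ω : ℂ) • (((nj : ℂ) + 1) • (2 • (sm * ρ * sp) - (sp * sm * ρ + ρ * (sp * sm)))
    + (nj : ℂ) • (2 • (sp * ρ * sm) - (sm * sp * ρ + ρ * (sm * sp))))

/-- The controlled dissipator 𝓛ᴰ_n of the two-qubit master equation. -/
def diss (Ω1 Ω2 : ℝ) (n : ℝ × ℝ) (ρ : M4) : M4 :=
  dissJ s1m s1p Ω1 n.1 ρ + dissJ s2m s2p Ω2 n.2 ρ

/-- Contribution of qubit j to the adjoint superoperator: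
Ω[(n+1)(2σ⁺χσ⁻ − {σ⁺σ⁻,χ}) + n(2σ⁻χσ⁺ − {σ⁻σ⁺,χ})]. -/
def dissAdjJ (sm sp : M4) (Ω nj : ℝ) (χ : M4) : M4 :=
  (Ω : ℂ) • (((nj : ℂ) + 1) • (2 • (sp * χ * sm) - (sp * sm * χ + χ * (sp * sm)))
    + (nj : ℂ) • (2 • (sm * χ * sp) - (sm * sp * χ + χ * (sm * sp))))

/-- The adjoint superoperator 𝓛ᴰ†_n. -/
def dissAdj (Ω1 Ω2 : ℝ) (n : ℝ × ℝ) (χ : M4) : M4 :=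
  dissAdjJ s1m s1p Ω1 n.1 χ + dissAdjJ s2m s2p Ω2 n.2 χ

/-- Free Hamiltonian H₀ = (ω₁/2)W₁ + (ω₂/2)W₂. -/
def H0 (ω1 ω2 : ℝ) : M4 := ((ω1 / 2 : ℝ) : ℂ) • W1 + ((ω2 / 2 : ℝ) : ℂ) • W2

/-- Controlled Hamiltonian H_c = H₀ + ε(Λ₁n₁W₁ + Λ₂n₂W₂) + uV,
for c = (u, n₁, n₂) : Fin 3 → ℝ. -/
def Hc (ω1 ω2 Λ1 Λ2 ε : ℝ) (V : M4) (c : Fin 3 → ℝ) : M4 :=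
  H0 ω1 ω2 + (ε : ℂ) • (((Λ1 * c 1 : ℝ) : ℂ) • W1 + ((Λ2 * c 2 : ℝ) : ℂ) • W2)
    + ((c 0 : ℝ) : ℂ) • V

/-- Hilbert–Schmidt inner product ⟨A,B⟩ = Tr(A†B). -/
def hsInner (A B : M4) : ℂ := Matrix.trace (Aᴴ * B)

/-- Coherent switching function 𝒦ᵘ(χ,ρ) = ⟨χ, −i[V,ρ]⟩ (complex form). -/
def KuC (V χ ρ : M4) : ℂ := hsInner χ ((-Complex.I) • (V * ρ - ρ * V))

/-- Incoherent switching function for qubit j: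
𝒦ⁿʲ(χ,ρ) = ⟨χ, −i[Λ_j W_j, ρ] + εΩ_j(2σ_j⁻ρσ_j⁺ + 2σ_j⁺ρσ_j⁻ − 2ρ)⟩ (complex form). -/
def KnC (sm sp Wj : M4) (Λ ε Ω : ℝ) (χ ρ : M4) : ℂ :=
  hsInner χ ((-Complex.I) • ((Λ : ℂ) • (Wj * ρ - ρ * Wj))
    + ((ε * Ω : ℝ) : ℂ) • (2 • (sm * ρ * sp) + 2 • (sp * ρ * sm) - 2 • ρ))

/-- The real switching-function vector 𝒦ᶜ(χ,ρ) = (𝒦ᵘ(χ,ρ), 𝒦ⁿ¹(χ,ρ), 𝒦ⁿ²(χ,ρ)) ∈ ℝ³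
(for Hermitian χ, ρ the values of 𝒦ᵘ, 𝒦ⁿʲ are real, so the real parts are taken). -/
def Kc (Λ1 Λ2 ε Ω1 Ω2 : ℝ) (V χ ρ : M4) : Fin 3 → ℝ :=
  ![(KuC V χ ρ).re, (KnC s1m s1p W1 Λ1 ε Ω1 χ ρ).re, (KnC s2m s2p W2 Λ2 ε Ω2 χ ρ).re]

/-- Euclidean inner product on ℝ³. -/
def inner3 (x y : Fin 3 → ℝ) : ℝ := x 0 * y 0 + x 1 * y 1 + x 2 * y 2

/-- Squared Euclidean norm on ℝ³. -/
def norm3sq (x : Fin 3 → ℝ) : ℝ := inner3 x x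

/-- p_j(t) = 1 − (1/2)e^{−2εΩ_j t}. -/
def pbar (ε Ω t : ℝ) : ℝ := 1 - (1 / 2) * Real.exp (-2 * ε * Ω * t)
/-- q_j(t) = (1/2)e^{−2εΩ_j t}. -/
def qbar (ε Ω t : ℝ) : ℝ := (1 / 2) * Real.exp (-2 * ε * Ω * t)

/-- ρ̄(t) = diag(p₁p₂, p₁q₂, q₁p₂, q₁q₂): solution of the free GKSL evolution
with ρ̄(0) = (1/4)I₄. -/
def rhoBar (ε Ω1 Ω2 : ℝ) (t : ℝ) : M4 :=
  diag4 ((pbar ε Ω1 t * pbar ε Ω2 t : ℝ) : ℂ) ((pbar ε Ω1 t * qbar ε Ω2 t : ℝ) : ℂ)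
    ((qbar ε Ω1 t * pbar ε Ω2 t : ℝ) : ℂ) ((qbar ε Ω1 t * qbar ε Ω2 t : ℝ) : ℂ)

/-- g_j(t) = 1 − e^{2εΩ_j(t−T)}. -/
def gbar (ε Ω T t : ℝ) : ℝ := 1 - Real.exp (2 * ε * Ω * (t - T))

/-- χ̄(t) = diag(1, g₂, g₁, g₁g₂): solution of the adjoint system with zero
controls and χ̄(T) = diag(1,0,0,0). -/
def chiBar (ε Ω1 Ω2 T : ℝ) (t : ℝ) : M4 :=
  diag4 1 ((gbar ε Ω2 T t : ℝ) : ℂ) ((gbar ε Ω1 T t : ℝ) : ℂ)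
    ((gbar ε Ω1 T t * gbar ε Ω2 T t : ℝ) : ℂ)

attribute [local instance] Matrix.frobeniusNormedAddCommGroup Matrix.frobeniusNormedSpace


theorem HasDerivAt.kronecker {𝕜 α l m n p : Type*} [NontriviallyNormedField 𝕜]
    [CompleteSpace 𝕜] [NormedCommRing α] [NormedAlgebra 𝕜 α] [FiniteDimensional 𝕜 α]
    [Fintype l] [Fintype m] [Fintype n] [Fintype p]
    {A : 𝕜 → Matrix l m α} {B : 𝕜 → Matrix n p α} {A' : Matrix l m α} {B' : Matrix n p α}
    {t : 𝕜} (hA : HasDerivAt A A' t) (hB : HasDerivAt B B' t) :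
    HasDerivAt (fun s => A s ⊗ₖ B s) (A' ⊗ₖ B t + A t ⊗ₖ B') t := by
  rw [add_comm]
  exact (kroneckerBilinear (R := 𝕜)).toContinuousBilinearMap.hasDerivAt_of_bilinear
    (fun _ => hA) (fun _ => hB)

lemma σp_mul_σp : σp * σp = 0 := by
  ext i j; fin_cases i <;> fin_cases j <;> simp [σp]

lemma σm_mul_σp_mul_σm : σm * σp * σm = σm := by
  ext i j; fin_cases i <;> fin_cases j <;> simp [σp, σm]

lemma commute_σz_σp_mul_σm : Commute σz (σp * σm) := by
  ext i j; fin_cases i <;> fin_cases j <;> simp [σp, σm, σz]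

def qubitDissAdj (χ : Matrix (Fin 2) (Fin 2) ℂ) : Matrix (Fin 2) (Fin 2) ℂ :=
  2 • (σp * χ * σm) - (σp * σm * χ + χ * (σp * σm))

lemma dissAdj_zero_kronecker (Ω1 Ω2 : ℝ) (A B : Matrix (Fin 2) (Fin 2) ℂ) :
    dissAdj Ω1 Ω2 (0, 0) (A ⊗ₖ B)
      = (Ω1 : ℂ) • (qubitDissAdj A ⊗ₖ B) + (Ω2 : ℂ) • (A ⊗ₖ qubitDissAdj B) := by
  simp only [dissAdj, dissAdjJ, qubitDissAdj, s1p, s1m, s2p, s2m, ← mul_kronecker_mul, mul_one,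
    one_mul, ofReal_zero, zero_add, one_smul, zero_smul, add_zero]
  ext ⟨i, j⟩ ⟨k, l⟩
  simp only [Matrix.add_apply, Matrix.sub_apply, Matrix.smul_apply, kronecker_apply, smul_eq_mul]
  simp only [nsmul_eq_mul]
  ring

lemma commute_H0_kronecker (ω1 ω2 : ℝ) {A B : Matrix (Fin 2) (Fin 2) ℂ}
    (hA : Commute σz A) (hB : Commute σz B) : Commute (H0 ω1 ω2) (A ⊗ₖ B) := by
  have h1 : Commute W1 (A ⊗ₖ B) := by
    simp [Commute, SemiconjBy, W1, ← mul_kronecker_mul, hA.eq]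
  have h2 : Commute W2 (A ⊗ₖ B) := by
    simp [Commute, SemiconjBy, W2, ← mul_kronecker_mul, hB.eq]
  exact (h1.smul_left _).add_left (h2.smul_left _)

def qubitCostate (ε Ω T t : ℝ) : Matrix (Fin 2) (Fin 2) ℂ :=
  1 - Real.exp (2 * ε * Ω * (t - T)) • (σp * σm)

lemma chiBar_eq_kronecker (ε Ω1 Ω2 T t : ℝ) :
    chiBar ε Ω1 Ω2 T t = qubitCostate ε Ω1 T t ⊗ₖ qubitCostate ε Ω2 T t := by
  ext ⟨i, j⟩ ⟨k, l⟩
  fin_cases i <;> fin_cases j <;> fin_cases k <;> fin_cases l <;>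
    simp [chiBar, diag4, gbar, qubitCostate, σp, σm]

lemma commute_σz_qubitCostate (ε Ω T t : ℝ) : Commute σz (qubitCostate ε Ω T t) :=
  (Commute.one_right σz).sub_right (commute_σz_σp_mul_σm.smul_right _)

lemma qubitDissAdj_qubitCostate (ε Ω T t : ℝ) :
    qubitDissAdj (qubitCostate ε Ω T t) = (2 * Real.exp (2 * ε * Ω * (t - T))) • (σp * σm) := by
  have hjump : σp * (σp * σm) * σm = 0 := by rw [← mul_assoc, σp_mul_σp, zero_mul, zero_mul]
  have hproj : σp * σm * (σp * σm) = σp * σm := by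
    rw [mul_assoc σp, ← mul_assoc σm, σm_mul_σp_mul_σm]
  simp only [qubitDissAdj, qubitCostate, mul_sub, sub_mul, mul_one, one_mul, mul_smul_comm,
    smul_mul_assoc, hjump, hproj, smul_zero]
  module

lemma hasDerivAt_qubitCostate (ε Ω T t : ℝ) :
    HasDerivAt (qubitCostate ε Ω T)
      (-((ε : ℂ) * Ω) • qubitDissAdj (qubitCostate ε Ω T t)) t := by
  have hexp : HasDerivAt (fun s => Real.exp (2 * ε * Ω * (s - T)))
      (Real.exp (2 * ε * Ω * (t - T)) * (2 * ε * Ω)) t := by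
    simpa using (((hasDerivAt_id t).sub_const T).const_mul (2 * ε * Ω)).exp
  rw [qubitDissAdj_qubitCostate]
  refine ((hexp.smul_const (σp * σm)).const_sub 1).congr_deriv ?_
  rw [← neg_smul, ← Complex.coe_smul, ← Complex.coe_smul, smul_smul]
  congr 1
  push_cast
  ring

theorem chiBar_solves_adjoint_system_general
    (ω1 ω2 Ω1 Ω2 ε : ℝ)
    (T : ℝ) :
    chiBar ε Ω1 Ω2 T T = diag4 1 0 0 0
      ∧ ∀ t : ℝ, HasDerivAt (chiBar ε Ω1 Ω2 T)
          ((-Complex.I) • (H0 ω1 ω2 * chiBar ε Ω1 Ω2 T t - chiBar ε Ω1 Ω2 T t * H0 ω1 ω2)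
            - (ε : ℂ) • dissAdj Ω1 Ω2 (0, 0) (chiBar ε Ω1 Ω2 T t)) t := by
  refine ⟨by simp [chiBar, gbar], fun t => ?_⟩
  have hχ : chiBar ε Ω1 Ω2 T = fun s => qubitCostate ε Ω1 T s ⊗ₖ qubitCostate ε Ω2 T s :=
    funext (chiBar_eq_kronecker ε Ω1 Ω2 T)
  rw [hχ, (commute_H0_kronecker ω1 ω2 (commute_σz_qubitCostate ε Ω1 T t)
    (commute_σz_qubitCostate ε Ω2 T t)).eq, dissAdj_zero_kronecker]
  refine ((hasDerivAt_qubitCostate ε Ω1 T t).kronecker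
    (hasDerivAt_qubitCostate ε Ω2 T t)).congr_deriv ?_
  simp only [smul_kronecker, kronecker_smul]
  module

/-- χ̄(t) = diag(1, g₂, g₁, g₁g₂) with g_j(t) = 1 − e^{2εΩ_j(t−T)}
satisfies χ̄(T) = diag(1,0,0,0) and solves the adjoint (costate) system
χ̄′(t) = −i[H₀, χ̄(t)] − ε𝓛ᴰ†_{(0,0)}(χ̄(t)) for all t ∈ ℝ. -/
theorem chiBar_solves_adjoint_system
    (ω1 ω2 Ω1 Ω2 ε : ℝ)
    (hω1 : 0 < ω1) (hω2 : 0 < ω2) (hΩ1 : 0 < Ω1) (hΩ2 : 0 < Ω2) (hε : 0 < ε)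
    (T : ℝ) (hT : 0 < T) :
    chiBar ε Ω1 Ω2 T T = diag4 1 0 0 0
      ∧ ∀ t : ℝ, HasDerivAt (chiBar ε Ω1 Ω2 T)
          ((-Complex.I) • (H0 ω1 ω2 * chiBar ε Ω1 Ω2 T t - chiBar ε Ω1 Ω2 T t * H0 ω1 ω2)
            - (ε : ℂ) • dissAdj Ω1 Ω2 (0, 0) (chiBar ε Ω1 Ω2 T t)) t :=
  chiBar_solves_adjoint_system_general ω1 ω2 Ω1 Ω2 ε T

end
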